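/- arXiv:1406.5226 — 2 statements merged into one kernel-verified Lean document; each statement's English description precedes it below -/
import Mathlib

section
/- Let f be 2π-periodic with |f̂_k| ≤ C^n-type bounds as above, and for n ≥ 1 define the doubly-indexed kernel A_n(f)^∧_{kj} = −2|k|^n|j| (f^n)^∧_{k−j} / n! if kj < 0 and 0 if kj ≥ 0. If |(f^n)^∧_m| ≤ C^n e^{-ρ|m|} for all m, then for every square-summable sequence (φ̂_j), the sequence ( ∑_j A_n(f)^∧_{kj} φ̂_j )_k satisfies | ∑_j A_n(f)^∧_{kj} φ̂_j | ≤ ( ρ^{-3/2} e^{2ρ} ‖φ̂‖_{ℓ²} ) (C|k|)^n e^{-ρ|k|} / n! for all k ≠ 0. -/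
/-!
When `k` and `j` have opposite signs, `|k - j| = |k| + |j|`, so the decay of `g` splits as
`e^{-ρ|k|} e^{-ρ|j|}` and each kernel entry is at most `(C|k|)^n e^{-ρ|k|} / n!` times the weight
`2|j| e^{-ρ|j|}`, supported on the half-line of indices of sign opposite to `k`. Cauchy–Schwarz
against `φ` leaves the ℓ² norm of this weight: with `x = e^{-2ρ}`,
`∑_{m ≥ 1} 4 m² x^m = 4x(1 + x)/(1 - x)³ ≤ e^{4ρ}/ρ³`, because `1 - x ≥ 2ρx`.
-/

open Real

theorem Real.summable_and_tsum_mul_le_sqrt_mul_sqrt {ι : Type*} {f g : ι → ℝ}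
    (hf : ∀ i, 0 ≤ f i) (hg : ∀ i, 0 ≤ g i)
    (hf2 : Summable fun i => f i ^ 2) (hg2 : Summable fun i => g i ^ 2) :
    (Summable fun i => f i * g i) ∧
      ∑' i, f i * g i ≤ √(∑' i, f i ^ 2) * √(∑' i, g i ^ 2) := by
  simp_rw [← rpow_two] at hf2 hg2
  simpa only [rpow_two, sqrt_eq_rpow, one_div] using
    summable_and_inner_le_Lp_mul_Lq_tsum_of_nonneg HolderConjugate.two_two hf hg hf2 hg2

theorem norm_tsum_mul_le_of_norm_le {ι R : Type*} [SeminormedRing R] {a φ : ι → R} {w : ι → ℝ}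
    {D : ℝ} (hD : 0 ≤ D) (hw : ∀ i, 0 ≤ w i) (ha : ∀ i, ‖a i‖ ≤ D * w i)
    (hw2 : Summable fun i => w i ^ 2) (hφ : Summable fun i => ‖φ i‖ ^ 2) :
    ‖∑' i, a i * φ i‖ ≤ D * (√(∑' i, w i ^ 2) * √(∑' i, ‖φ i‖ ^ 2)) := by
  obtain ⟨hwφ, hcs⟩ :=
    Real.summable_and_tsum_mul_le_sqrt_mul_sqrt hw (fun i => norm_nonneg (φ i)) hw2 hφ
  calc ‖∑' i, a i * φ i‖ ≤ ∑' i, D * (w i * ‖φ i‖) :=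
        tsum_of_norm_bounded (hwφ.mul_left D).hasSum fun i =>
          (norm_mul_le _ _).trans (by rw [← mul_assoc]; gcongr; exact ha i)
    _ = D * ∑' i, w i * ‖φ i‖ := tsum_mul_left
    _ ≤ D * (√(∑' i, w i ^ 2) * √(∑' i, ‖φ i‖ ^ 2)) := by gcongr

theorem abs_sub_eq_abs_add_abs_of_mul_neg {α : Type*} [CommRing α] [LinearOrder α]
    [IsStrictOrderedRing α] {a b : α} (h : a * b < 0) : |a - b| = |a| + |b| := by
  rcases mul_neg_iff.mp h with ⟨ha, hb⟩ | ⟨ha, hb⟩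
  · rw [abs_of_pos (by linarith), abs_of_pos ha, abs_of_neg hb]; ring
  · rw [abs_of_neg (by linarith), abs_of_neg ha, abs_of_pos hb]; ring

theorem hasSum_sq_mul_geometric {𝕜 : Type*} [NormedField 𝕜] [CompleteSpace 𝕜] {x : 𝕜}
    (hx : ‖x‖ < 1) :
    HasSum (fun m : ℕ => ((m : 𝕜) + 1) ^ 2 * x ^ (m + 1)) (x * (1 + x) / (1 - x) ^ 3) := by
  have hx1 : 1 - x ≠ 0 := sub_ne_zero.mpr fun h => by simp [← h] at hx
  have hval : x * (1 + x) / (1 - x) ^ 3 =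
      x * (2 * (1 / (1 - x) ^ (2 + 1)) - 1 / (1 - x) ^ (1 + 1)) := by
    field_simp
    ring
  rw [hval]
  -- `(m + 1)² = 2 * (m + 2).choose 2 - (m + 1).choose 1`
  refine ((((hasSum_choose_mul_geometric_of_norm_lt_one 2 hx).mul_left 2).sub
    (hasSum_choose_mul_geometric_of_norm_lt_one 1 hx)).mul_left x).congr_fun fun m => ?_
  have hc := congrArg (Nat.cast : ℕ → 𝕜) (Nat.add_one_mul_choose_eq (m + 1) 1)
  push_cast [Nat.choose_one_right] at hc ⊢
  linear_combination x * x ^ m * hc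

theorem hasSum_ite_mul_neg {M : Type*} [AddCommMonoid M] [TopologicalSpace M] {k : ℤ}
    (hk : k ≠ 0) {h : ℕ → M} {s : M} (hs : HasSum (fun m : ℕ => h (m + 1)) s) :
    HasSum (fun j : ℤ => if k * j < 0 then h j.natAbs else 0) s := by
  obtain ⟨e, he_inj, he_neg, he_abs, he_range⟩ : ∃ e : ℕ → ℤ, e.Injective ∧
      (∀ m, k * e m < 0) ∧ (∀ m, (e m).natAbs = m + 1) ∧ ∀ j, k * j < 0 → j ∈ Set.range e := by
    rcases hk.lt_or_gt with hk | hk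
    · refine ⟨fun m => m + 1, fun a b hab => by simpa using hab,
        fun m => mul_neg_of_neg_of_pos hk (by positivity), fun m => by dsimp only; omega,
        fun j hj => ?_⟩
      have := pos_of_mul_neg_right hj hk.le
      exact ⟨j.natAbs - 1, by dsimp only; omega⟩
    · refine ⟨fun m => -(m + 1), fun a b hab => by simpa using hab,
        fun m => mul_neg_of_pos_of_neg hk (by dsimp only; omega), fun m => by dsimp only; omega,
        fun j hj => ?_⟩
      have := neg_of_mul_neg_right hj hk.le
      exact ⟨j.natAbs - 1, by dsimp only; omega⟩
  rw [← he_inj.hasSum_iff fun j hj => if_neg fun hkj => hj (he_range j hkj)]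
  simpa [Function.comp_def, he_neg, he_abs] using hs

noncomputable def kernelWeight (ρ : ℝ) (k j : ℤ) : ℝ :=
  if k * j < 0 then 2 * |(j : ℝ)| * exp (-ρ * |(j : ℝ)|) else 0

theorem kernelWeight_nonneg (ρ : ℝ) (k j : ℤ) : 0 ≤ kernelWeight ρ k j := by
  unfold kernelWeight
  split_ifs <;> positivity

theorem norm_kernel_entry_le {n : ℕ} {C ρ : ℝ} {g : ℤ → ℂ}
    (hg : ∀ m : ℤ, ‖g m‖ ≤ C ^ n * exp (-ρ * |(m : ℝ)|)) {k j : ℤ} (hkj : k * j < 0) :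
    ‖(-2 * |(k : ℝ)| ^ n * |(j : ℝ)| * g (k - j) / (n.factorial : ℝ) : ℂ)‖ ≤
      (C * |(k : ℝ)|) ^ n * exp (-ρ * |(k : ℝ)|) / n.factorial * kernelWeight ρ k j := by
  have hkj' : (k : ℝ) * j < 0 := by exact_mod_cast hkj
  have hgkj : ‖g (k - j)‖ ≤ C ^ n * (exp (-ρ * |(k : ℝ)|) * exp (-ρ * |(j : ℝ)|)) := by
    simpa only [Int.cast_sub, abs_sub_eq_abs_add_abs_of_mul_neg hkj', mul_add, exp_add]
      using hg (k - j)
  rw [kernelWeight, if_pos hkj]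
  simp only [norm_div, norm_mul, norm_neg, Complex.norm_real, Complex.norm_ofNat, norm_pow,
    Real.norm_eq_abs, abs_abs, Nat.abs_cast]
  calc 2 * |(k : ℝ)| ^ n * |(j : ℝ)| * ‖g (k - j)‖ / n.factorial
      ≤ 2 * |(k : ℝ)| ^ n * |(j : ℝ)| * (C ^ n * (exp (-ρ * |(k : ℝ)|) * exp (-ρ * |(j : ℝ)|)))
          / n.factorial := by gcongr
    _ = _ := by ring

theorem hasSum_kernelWeight_sq {ρ : ℝ} (hρ : 0 < ρ) {k : ℤ} (hk : k ≠ 0) :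
    HasSum (fun j => kernelWeight ρ k j ^ 2)
      (4 * (exp (-(2 * ρ)) * (1 + exp (-(2 * ρ))) / (1 - exp (-(2 * ρ))) ^ 3)) := by
  have hx : ‖exp (-(2 * ρ))‖ < 1 := by
    rw [norm_of_nonneg (exp_pos _).le, exp_lt_one_iff]
    linarith
  have hsq : ∀ m : ℕ,
      (2 * (m : ℝ) * exp (-ρ * m)) ^ 2 = 4 * ((m : ℝ) ^ 2 * exp (-(2 * ρ)) ^ m) := by
    intro m
    rw [← exp_nat_mul, mul_pow, sq (exp _), ← exp_add]
    ring_nf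
  convert hasSum_ite_mul_neg hk (h := fun m : ℕ => (2 * (m : ℝ) * exp (-ρ * m)) ^ 2) ?_ using 1
  · funext j
    unfold kernelWeight
    split_ifs <;> simp [Nat.cast_natAbs]
  · refine ((hasSum_sq_mul_geometric hx).mul_left 4).congr_fun fun m => ?_
    rw [← Nat.cast_add_one, hsq]

theorem tsum_kernelWeight_sq_le {ρ : ℝ} (hρ : 0 < ρ) {k : ℤ} (hk : k ≠ 0) :
    ∑' j, kernelWeight ρ k j ^ 2 ≤ exp (4 * ρ) / ρ ^ 3 := by
  rw [(hasSum_kernelWeight_sq hρ hk).tsum_eq]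
  set x := exp (-(2 * ρ)) with hx
  have hx0 : 0 < x := exp_pos _
  have hx1 : x ≤ 1 := exp_le_one_iff.mpr (by linarith)
  have hinv : x⁻¹ = exp (2 * ρ) := by rw [hx, exp_neg, inv_inv]
  have hgap : 2 * ρ * x ≤ 1 - x := by
    have := mul_le_mul_of_nonneg_right (add_one_le_exp (2 * ρ)) hx0.le
    rw [← hinv, inv_mul_cancel₀ hx0.ne'] at this
    linarith
  calc 4 * (x * (1 + x) / (1 - x) ^ 3) ≤ 4 * (x * (1 + x) / (2 * ρ * x) ^ 3) := by gcongr
    _ = (1 + x) / 2 * (x⁻¹) ^ 2 / ρ ^ 3 := by field_simp; ring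
    _ ≤ 1 * (x⁻¹) ^ 2 / ρ ^ 3 := by gcongr; linarith
    _ = exp (4 * ρ) / ρ ^ 3 := by rw [one_mul, hinv, ← exp_nat_mul]; ring_nf

theorem rpow_neg_three_halves_mul_exp_sq {ρ : ℝ} (hρ : 0 < ρ) :
    (ρ ^ (-(3 : ℝ) / 2) * exp (2 * ρ)) ^ 2 = exp (4 * ρ) / ρ ^ 3 := by
  rw [mul_pow, ← rpow_natCast, ← rpow_mul hρ.le, ← exp_nat_mul]
  norm_num
  ring_nf

theorem stmt_11_general (n : ℕ) (C ρ : ℝ) (hρ : 0 < ρ)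
    (g : ℤ → ℂ) (hg : ∀ m : ℤ, ‖g m‖ ≤ C ^ n * Real.exp (-ρ * |(m : ℝ)|))
    (φ : ℤ → ℂ) (hφ : Summable (fun j : ℤ => ‖φ j‖ ^ 2))
    (A : ℤ → ℤ → ℂ)
    (hA : ∀ k j : ℤ, A k j =
      if k * j < 0 then -2 * |(k : ℝ)| ^ n * |(j : ℝ)| * g (k - j) / (n.factorial : ℝ)
      else 0) :
    ∀ k : ℤ, k ≠ 0 →
      ‖∑' j : ℤ, A k j * φ j‖ ≤
        (ρ ^ (-(3 : ℝ) / 2) * Real.exp (2 * ρ) * Real.sqrt (∑' j : ℤ, ‖φ j‖ ^ 2)) *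
          (C * |(k : ℝ)|) ^ n * Real.exp (-ρ * |(k : ℝ)|) / (n.factorial : ℝ) := by
  intro k hk
  set D := (C * |(k : ℝ)|) ^ n * exp (-ρ * |(k : ℝ)|) / n.factorial
  have hCn : 0 ≤ C ^ n := by simpa using (norm_nonneg _).trans (hg 0)
  have hD : 0 ≤ D := by
    simp only [D, mul_pow]
    exact div_nonneg (mul_nonneg (mul_nonneg hCn (by positivity)) (exp_pos _).le) (by positivity)
  have hA_le : ∀ j, ‖A k j‖ ≤ D * kernelWeight ρ k j := by
    intro j
    rw [hA]
    split_ifs with hkj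
    · exact norm_kernel_entry_le hg hkj
    · simp [kernelWeight, hkj]
  have hweight : √(∑' j, kernelWeight ρ k j ^ 2) ≤ ρ ^ (-(3 : ℝ) / 2) * exp (2 * ρ) := by
    rw [sqrt_le_left (by positivity), rpow_neg_three_halves_mul_exp_sq hρ]
    exact tsum_kernelWeight_sq_le hρ hk
  calc ‖∑' j, A k j * φ j‖
      ≤ D * (√(∑' j, kernelWeight ρ k j ^ 2) * √(∑' j, ‖φ j‖ ^ 2)) :=
        norm_tsum_mul_le_of_norm_le hD (kernelWeight_nonneg ρ k) hA_le
          (hasSum_kernelWeight_sq hρ hk).summable hφ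
    _ ≤ D * (ρ ^ (-(3 : ℝ) / 2) * exp (2 * ρ) * √(∑' j, ‖φ j‖ ^ 2)) := by gcongr
    _ = _ := by ring

/-- The kernel A_n(f)^∧_{kj} = −2|k|^n |j| (f^n)^∧_{k−j}/n! for kj<0 (0 otherwise),
    applied to an ℓ² sequence φ̂, produces an exponentially decaying sequence:
    |∑_j A_n(f)^∧_{kj} φ̂_j| ≤ (ρ^{-3/2} e^{2ρ} ‖φ̂‖_{ℓ²}) (C|k|)^n e^{-ρ|k|}/n!. -/
theorem stmt_11 (n : ℕ) (hn : 1 ≤ n) (C ρ : ℝ) (hC : 1 ≤ C) (hρ : 0 < ρ)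
    (g : ℤ → ℂ) (hg : ∀ m : ℤ, ‖g m‖ ≤ C ^ n * Real.exp (-ρ * |(m : ℝ)|))
    (φ : ℤ → ℂ) (hφ : Summable (fun j : ℤ => ‖φ j‖ ^ 2))
    (A : ℤ → ℤ → ℂ)
    (hA : ∀ k j : ℤ, A k j =
      if k * j < 0 then -2 * |(k : ℝ)| ^ n * |(j : ℝ)| * g (k - j) / (n.factorial : ℝ)
      else 0) :
    ∀ k : ℤ, k ≠ 0 →
      ‖∑' j : ℤ, A k j * φ j‖ ≤
        (ρ ^ (-(3 : ℝ) / 2) * Real.exp (2 * ρ) * Real.sqrt (∑' j : ℤ, ‖φ j‖ ^ 2)) *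
          (C * |(k : ℝ)|) ^ n * Real.exp (-ρ * |(k : ℝ)|) / (n.factorial : ℝ) :=
  stmt_11_general n C ρ hρ g hg φ hφ A hA
end

section
/- Let ζ : ℝ → ℂ be smooth, 2π-periodic modulo 2π (ζ(α+2π) = ζ(α) + 2π), injective on [0,2π), with ζ'(α) ≠ 0. Then the kernel A(α,β) = Im{ (ζ'(β)/2) cot((ζ(α)−ζ(β))/2) − (1/2) cot((α−β)/2) } extends continuously to the diagonal, with limit A(α,α) = Im{ −ζ''(α)/(2 ζ'(α)) }. -/
open Complex Filter Metric

noncomputable def cotC17 (z : ℂ) : ℂ := Complex.cos z / Complex.sin z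


lemma aux_cos_bound (z : ℂ) (hz : ‖z‖ ≤ 1) : ‖Complex.cos z‖ ≤ 3 := by
  have h1 : ‖Complex.exp (z * I)‖ ≤ Real.exp 1 := by
    rw [Complex.norm_exp]
    apply Real.exp_le_exp.2
    have : (z * I).re = -z.im := by simp
    rw [this]
    calc -z.im ≤ |z.im| := neg_le_abs _
    _ ≤ ‖z‖ := Complex.abs_im_le_norm z
    _ ≤ 1 := hz
  have h2 : ‖Complex.exp (-z * I)‖ ≤ Real.exp 1 := by
    rw [Complex.norm_exp]
    apply Real.exp_le_exp.2
    have : (-z * I).re = z.im := by simp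
    rw [this]
    calc z.im ≤ |z.im| := le_abs_self _
    _ ≤ ‖z‖ := Complex.abs_im_le_norm z
    _ ≤ 1 := hz
  have he : Real.exp 1 ≤ 3 := by
    have := Real.exp_one_lt_d9
    linarith
  rw [Complex.cos]
  calc ‖(Complex.exp (z * I) + Complex.exp (-z * I)) / 2‖
      = ‖Complex.exp (z * I) + Complex.exp (-z * I)‖ / 2 := by
        rw [norm_div]; norm_num
    _ ≤ (Real.exp 1 + Real.exp 1) / 2 := by
        gcongr
        exact (norm_add_le _ _).trans (by linarith)
    _ ≤ 3 := by linarith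

lemma aux_sin_bound (z : ℂ) (hz : ‖z‖ ≤ 1) : ‖Complex.sin z‖ ≤ 3 * ‖z‖ := by
  have := (convex_closedBall (0:ℂ) 1).norm_image_sub_le_of_norm_hasDerivWithin_le
    (f := Complex.sin) (f' := Complex.cos)
    (fun x _ => (Complex.hasDerivAt_sin x).hasDerivWithinAt)
    (fun x hx => aux_cos_bound x (by simpa using hx))
    (mem_closedBall_self zero_le_one) (by simpa using hz)
  simpa using this


lemma aux_N_deriv (x : ℂ) :
    HasDerivAt (fun w : ℂ => w * Complex.cos (w/2) - 2 * Complex.sin (w/2))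
      (-(x/2) * Complex.sin (x/2)) x := by
  have hhalf : HasDerivAt (fun w : ℂ => w / 2) (1/2) x := by
    simpa using (hasDerivAt_id x).div_const 2
  have hc : HasDerivAt (fun w : ℂ => Complex.cos (w/2))
      (-Complex.sin (x/2) * (1/2)) x := by
    have := (Complex.hasDerivAt_cos (x/2)).comp x hhalf; exact this
  have hs : HasDerivAt (fun w : ℂ => Complex.sin (w/2))
      (Complex.cos (x/2) * (1/2)) x := by
    have := (Complex.hasDerivAt_sin (x/2)).comp x hhalf; exact this
  have h1 : HasDerivAt (fun w : ℂ => w * Complex.cos (w/2))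
      (1 * Complex.cos (x/2) + x * (-Complex.sin (x/2) * (1/2))) x :=
    (hasDerivAt_id x).mul hc
  have := h1.sub (hs.const_mul 2)
  exact this.congr_deriv (by ring)

lemma aux_N_bound (w : ℂ) (hw : ‖w‖ ≤ 1) :
    ‖w * Complex.cos (w/2) - 2 * Complex.sin (w/2)‖ ≤ (3/4) * ‖w‖^2 * ‖w‖ := by
  have hmvt := (convex_closedBall (0:ℂ) ‖w‖).norm_image_sub_le_of_norm_hasDerivWithin_le
    (f := fun w : ℂ => w * Complex.cos (w/2) - 2 * Complex.sin (w/2))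
    (f' := fun x => -(x/2) * Complex.sin (x/2))
    (fun x _ => (aux_N_deriv x).hasDerivWithinAt)
    (fun x hx => by
      have hx' : ‖x‖ ≤ ‖w‖ := by simpa using hx
      have hx1 : ‖x‖ ≤ 1 := hx'.trans hw
      have hhalf : ‖x/2‖ = ‖x‖/2 := by rw [norm_div]; norm_num
      have hs : ‖Complex.sin (x/2)‖ ≤ 3 * ‖x/2‖ :=
        aux_sin_bound _ (by rw [hhalf]; linarith [norm_nonneg x])
      calc ‖-(x/2) * Complex.sin (x/2)‖ = ‖x‖/2 * ‖Complex.sin (x/2)‖ := by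
            rw [norm_mul, norm_neg, hhalf]
        _ ≤ ‖x‖/2 * (3 * (‖x‖/2)) := by
            apply mul_le_mul_of_nonneg_left _ (by positivity)
            rw [hhalf] at hs; exact hs
        _ = (3/4) * ‖x‖^2 := by ring
        _ ≤ (3/4) * ‖w‖^2 := by
            have := pow_le_pow_left₀ (norm_nonneg x) hx' 2
            linarith)
    (show (0:ℂ) ∈ closedBall (0:ℂ) ‖w‖ from mem_closedBall_self (norm_nonneg w))
    (show w ∈ closedBall (0:ℂ) ‖w‖ by simp [mem_closedBall, dist_zero_right])
  simpa using hmvt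

lemma aux_half_tendsto : Filter.Tendsto (fun w : ℂ => w / 2)
    (nhdsWithin 0 {0}ᶜ) (nhdsWithin 0 {0}ᶜ) := by
  apply tendsto_nhdsWithin_of_tendsto_nhds_of_eventually_within
  · have hc : Continuous (fun w : ℂ => w / 2) := by fun_prop
    exact (hc.tendsto' 0 0 (by norm_num)).mono_left nhdsWithin_le_nhds
  · filter_upwards [self_mem_nhdsWithin] with w hw
    simp only [Set.mem_compl_iff, Set.mem_singleton_iff] at hw ⊢
    exact div_ne_zero hw two_ne_zero

lemma aux_sin_slope : Filter.Tendsto (fun w : ℂ => Complex.sin (w/2) / (w/2))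
    (nhdsWithin 0 {0}ᶜ) (nhds 1) := by
  have h := hasDerivAt_iff_tendsto_slope.mp (Complex.hasDerivAt_sin 0)
  rw [Complex.cos_zero] at h
  have h2 := h.comp aux_half_tendsto
  apply h2.congr
  intro w
  simp [slope_def_field, Function.comp]

lemma aux_w_div_sin : Filter.Tendsto (fun w : ℂ => w / Complex.sin (w/2))
    (nhdsWithin 0 {0}ᶜ) (nhds 2) := by
  have h : Filter.Tendsto (fun w : ℂ => 2 / (Complex.sin (w/2) / (w/2)))
      (nhdsWithin 0 {0}ᶜ) (nhds 2) := by
    have := (tendsto_const_nhds (x := (2:ℂ))).div aux_sin_slope one_ne_zero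
    simpa [Pi.div_def] using this
  apply h.congr'
  filter_upwards [self_mem_nhdsWithin] with w hw
  simp only [Set.mem_compl_iff, Set.mem_singleton_iff] at hw
  rw [div_div_eq_mul_div]
  by_cases hs : Complex.sin (w/2) = 0
  · simp [hs]
  · field_simp

lemma aux_hA : Filter.Tendsto (fun w : ℂ => cotC17 (w/2) - 2/w)
    (nhdsWithin 0 {0}ᶜ) (nhds 0) := by
  have key : Filter.Tendsto (fun w : ℂ =>
      ((w * Complex.cos (w/2) - 2 * Complex.sin (w/2)) / w^2) * (w / Complex.sin (w/2)))
      (nhdsWithin 0 {0}ᶜ) (nhds 0) := by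
    have h1 : Filter.Tendsto (fun w : ℂ =>
        (w * Complex.cos (w/2) - 2 * Complex.sin (w/2)) / w^2)
        (nhdsWithin 0 {0}ᶜ) (nhds 0) := by
      apply squeeze_zero_norm' (a := fun w : ℂ => (3/4) * ‖w‖)
      · filter_upwards [inter_mem self_mem_nhdsWithin
          (nhdsWithin_le_nhds (Metric.ball_mem_nhds (0:ℂ) one_pos))] with w hw
        obtain ⟨hw1, hw2⟩ := hw
        have hwn : ‖w‖ ≤ 1 := by
          have := hw2
          simp only [mem_ball, dist_zero_right] at this
          exact this.le
        rw [norm_div, norm_pow]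
        have hwne : w ≠ 0 := by simpa using hw1
        rw [div_le_iff₀' (pow_pos (norm_pos_iff.mpr hwne) 2)]
        calc ‖w * Complex.cos (w/2) - 2 * Complex.sin (w/2)‖
            ≤ (3/4) * ‖w‖^2 * ‖w‖ := aux_N_bound w hwn
          _ = ‖w‖^2 * (3/4 * ‖w‖) := by ring
      · have : Filter.Tendsto (fun w : ℂ => (3/4 : ℝ) * ‖w‖) (nhds (0:ℂ)) (nhds ((3/4:ℝ) * ‖(0:ℂ)‖)) :=
          ((continuous_const.mul continuous_norm).tendsto (0:ℂ))
        simpa using this.mono_left nhdsWithin_le_nhds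
    simpa using h1.mul aux_w_div_sin
  apply key.congr'
  filter_upwards [inter_mem self_mem_nhdsWithin
      (nhdsWithin_le_nhds (Metric.ball_mem_nhds (0:ℂ) Real.pi_pos))] with w hw
  obtain ⟨hw1, hw2⟩ := hw
  simp only [Set.mem_compl_iff, Set.mem_singleton_iff] at hw1
  simp only [mem_ball, dist_zero_right] at hw2
  have hsin : Complex.sin (w/2) ≠ 0 := by
    intro hs0
    rw [Complex.sin_eq_zero_iff] at hs0
    obtain ⟨k, hk⟩ := hs0
    have hk2 : w = 2 * (k:ℂ) * (Real.pi:ℂ) := by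
      have : w = 2 * (w/2) := by ring
      rw [this, hk]; ring
    rcases eq_or_ne k 0 with h0 | h0
    · exact hw1 (by simp [hk2, h0])
    · have hk1 : (1:ℝ) ≤ |(k:ℝ)| := by
        rw [← Int.cast_abs]
        exact_mod_cast Int.one_le_abs h0
      have hnw : ‖w‖ = 2 * |(k:ℝ)| * Real.pi := by
        rw [hk2]
        rw [show ((2:ℂ) * (k:ℂ) * (Real.pi:ℂ)) = (((2 * (k:ℝ) * Real.pi : ℝ) : ℂ)) by push_cast; ring]
        rw [Complex.norm_real, Real.norm_eq_abs, abs_mul, abs_mul,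
          _root_.abs_of_nonneg Real.pi_pos.le]
        norm_num
      nlinarith [Real.pi_pos]
  unfold cotC17
  field_simp

/-- The boundary-integral kernel
    A(α,β) = Im{(ζ'(β)/2) cot((ζ(α)−ζ(β))/2) − (1/2) cot((α−β)/2)}
    extends continuously to the diagonal with limit Im{−ζ''(α)/(2ζ'(α))}. -/

theorem stmt_17 (ζ : ℝ → ℂ) (hζ : ContDiff ℝ (⊤ : ℕ∞) ζ)
    (hper : ∀ a : ℝ, ζ (a + 2 * Real.pi) = ζ a + 2 * Real.pi)
    (hinj : Set.InjOn ζ (Set.Ico 0 (2 * Real.pi)))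
    (hζ' : ∀ a : ℝ, deriv ζ a ≠ 0) (α : ℝ) :
    Filter.Tendsto
      (fun β : ℝ =>
        ((deriv ζ β / 2) * cotC17 ((ζ α - ζ β) / 2)
          - (1 / 2) * cotC17 (((α : ℂ) - β) / 2)).im)
      (nhdsWithin α {α}ᶜ)
      (nhds ((-(deriv (deriv ζ) α) / (2 * deriv ζ α)).im)) := by
  have hzi : ContDiff ℝ (⊤ : ℕ∞) ζ := hζ.of_le (by simp)
  set d := deriv ζ with hd_def
  set d2 := deriv (deriv ζ) with hd2_def
  have hζdiff : Differentiable ℝ ζ := hζ.differentiable (by simp)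
  have hdC : ContDiff ℝ (⊤ : ℕ∞) d := (contDiff_infty_iff_deriv.mp hzi).2
  have hddiff : Differentiable ℝ d := (contDiff_infty_iff_deriv.mp hdC).1
  have hd2cont : Continuous d2 := (contDiff_infty_iff_deriv.mp hdC).2.continuous
  -- slope limit
  have hG : Filter.Tendsto (fun β : ℝ => (ζ α - ζ β) / ((α:ℂ) - β))
      (nhdsWithin α {α}ᶜ) (nhds (d α)) := by
    have h := hasDerivAt_iff_tendsto_slope.mp (hζdiff α).hasDerivAt
    apply h.congr
    intro β
    rw [slope_def_module]
    rcases eq_or_ne β α with rfl | hβ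
    · simp
    · have hβℂ : ((β:ℂ) - α) ≠ 0 := by
        rw [sub_ne_zero]
        exact_mod_cast hβ
      have hβℂ' : ((α:ℂ) - β) ≠ 0 := sub_ne_zero.mpr (by exact_mod_cast (Ne.symm hβ))
      rw [Complex.real_smul]
      push_cast
      field_simp
      ring
  -- local injectivity
  have hne : ∀ᶠ β in nhdsWithin α {α}ᶜ, ζ α - ζ β ≠ 0 := by
    have h0 := hG.eventually_ne (hζ' α)
    filter_upwards [h0] with β hβ h
    exact hβ (by rw [h]; simp)
  have hαβne : ∀ᶠ β : ℝ in nhdsWithin α {α}ᶜ, ((α:ℂ) - (β:ℂ)) ≠ 0 := by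
    filter_upwards [self_mem_nhdsWithin] with β hβ
    simp only [Set.mem_compl_iff, Set.mem_singleton_iff] at hβ
    rw [sub_ne_zero]
    exact_mod_cast (Ne.symm hβ)
  have hζαβ : Filter.Tendsto (fun β : ℝ => ζ α - ζ β) (nhdsWithin α {α}ᶜ)
      (nhdsWithin 0 {0}ᶜ) := by
    apply tendsto_nhdsWithin_of_tendsto_nhds_of_eventually_within
    · have : Filter.Tendsto (fun β : ℝ => ζ α - ζ β) (nhds α) (nhds (ζ α - ζ α)) :=
        (tendsto_const_nhds.sub (hzi.continuous.tendsto α))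
      simpa using this.mono_left nhdsWithin_le_nhds
    · filter_upwards [hne] with β hβ
      simpa using hβ
  have hαβ : Filter.Tendsto (fun β : ℝ => ((α:ℂ) - β)) (nhdsWithin α {α}ᶜ)
      (nhdsWithin 0 {0}ᶜ) := by
    apply tendsto_nhdsWithin_of_tendsto_nhds_of_eventually_within
    · have : Filter.Tendsto (fun β : ℝ => ((α:ℂ) - β)) (nhds α) (nhds ((α:ℂ) - α)) :=
        (tendsto_const_nhds.sub (Complex.continuous_ofReal.tendsto α))
      simpa using this.mono_left nhdsWithin_le_nhds
    · filter_upwards [hαβne] with β hβ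
      simpa using hβ
  -- small terms
  have hdcont : Filter.Tendsto (fun β : ℝ => d β) (nhdsWithin α {α}ᶜ) (nhds (d α)) :=
    (hdC.continuous.tendsto α).mono_left nhdsWithin_le_nhds
  have hterm2 : Filter.Tendsto
      (fun β : ℝ => (d β / 2) * (cotC17 ((ζ α - ζ β)/2) - 2/(ζ α - ζ β)))
      (nhdsWithin α {α}ᶜ) (nhds 0) := by
    have := (hdcont.div_const 2).mul (aux_hA.comp hζαβ)
    simpa using this
  have hterm3 : Filter.Tendsto
      (fun β : ℝ => (1/2 : ℂ) * (cotC17 (((α:ℂ) - β)/2) - 2/((α:ℂ) - β)))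
      (nhdsWithin α {α}ᶜ) (nhds 0) := by
    have := (tendsto_const_nhds (x := (1/2 : ℂ))).mul (aux_hA.comp hαβ)
    simpa using this
  -- φ limit via MVT
  set φ : ℝ → ℂ := fun β => (d β * ((α:ℂ) - β) - (ζ α - ζ β)) / ((α:ℂ) - β)^2 with hφ_def
  have hφ : Filter.Tendsto φ (nhdsWithin α {α}ᶜ) (nhds (-(d2 α)/2)) := by
    rw [Metric.tendsto_nhdsWithin_nhds]
    intro ε hε
    obtain ⟨δ, hδpos, hδ⟩ := Metric.continuousAt_iff.mp (hd2cont.continuousAt (x := α)) (ε/2)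
      (by linarith)
    refine ⟨δ, hδpos, ?_⟩
    intro β hβmem hβdist
    simp only [Set.mem_compl_iff, Set.mem_singleton_iff] at hβmem
    -- the auxiliary function
    set f : ℝ → ℂ := fun x => d x * ((α:ℂ) - x) - (ζ α - ζ x) + (d2 α/2) * ((α:ℂ) - x)^2
      with hf_def
    have hf' : ∀ x : ℝ, HasDerivAt f ((d2 x - d2 α) * ((α:ℂ) - x)) x := by
      intro x
      have hofReal : HasDerivAt (fun x : ℝ => (x:ℂ)) 1 x := by
        exact (hasDerivAt_id x).ofReal_comp.congr_deriv (by simp)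
      have h1 : HasDerivAt (fun x : ℝ => ((α:ℂ) - x)) (-1) x := by
        exact ((hasDerivAt_const x ((α:ℂ))).sub hofReal).congr_deriv (by ring)
      have hdx : HasDerivAt d (d2 x) x := (hddiff x).hasDerivAt
      have hζx : HasDerivAt ζ (d x) x := (hζdiff x).hasDerivAt
      have hmul : HasDerivAt (fun x : ℝ => d x * ((α:ℂ) - x))
          (d2 x * ((α:ℂ) - x) + d x * (-1)) x := hdx.mul h1
      have hsub : HasDerivAt (fun x : ℝ => ζ α - ζ x) (0 - d x) x :=
        (hasDerivAt_const x (ζ α)).sub hζx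
      have hsq : HasDerivAt (fun x : ℝ => ((α:ℂ) - x)^2)
          ((-1) * ((α:ℂ) - x) + ((α:ℂ) - x) * (-1)) x := by
        have := h1.pow 2
        exact this.congr_deriv (by push_cast; ring)
      have := (hmul.sub hsub).add (hsq.const_mul (d2 α/2))
      exact this.congr_deriv (by push_cast; ring)
    have hbound : ∀ x ∈ closedBall α |β - α|,
        ‖(d2 x - d2 α) * ((α:ℂ) - x)‖ ≤ (ε/2) * |β - α| := by
      intro x hx
      rw [mem_closedBall, Real.dist_eq] at hx
      have hx2 : ‖d2 x - d2 α‖ ≤ ε/2 := by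
        have : dist x α < δ := by
          rw [Real.dist_eq]
          calc |x - α| ≤ |β - α| := hx
            _ < δ := by rwa [Real.dist_eq] at hβdist
        have := hδ this
        rw [dist_eq_norm] at this
        linarith
      have hx3 : ‖((α:ℂ) - x)‖ ≤ |β - α| := by
        rw [show ((α:ℂ) - x) = (((α - x : ℝ)) : ℂ) by push_cast; ring,
          Complex.norm_real, Real.norm_eq_abs, abs_sub_comm]
        exact hx
      calc ‖(d2 x - d2 α) * ((α:ℂ) - x)‖ = ‖d2 x - d2 α‖ * ‖((α:ℂ) - x)‖ := norm_mul _ _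
        _ ≤ (ε/2) * |β - α| := by
            apply mul_le_mul hx2 hx3 (norm_nonneg _) (by linarith)
    have hmvt := (convex_closedBall α |β - α|).norm_image_sub_le_of_norm_hasDerivWithin_le
      (f := f) (f' := fun x => (d2 x - d2 α) * ((α:ℂ) - x))
      (fun x _ => (hf' x).hasDerivWithinAt) hbound
      (show α ∈ closedBall α |β - α| from mem_closedBall_self (abs_nonneg _))
      (show β ∈ closedBall α |β - α| by rw [mem_closedBall, Real.dist_eq])
    have hfα : f α = 0 := by simp [hf_def]
    rw [hfα, sub_zero] at hmvt
    have hβℂ : ((α:ℂ) - β) ≠ 0 := by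
      rw [sub_ne_zero]
      exact_mod_cast (Ne.symm hβmem)
    have hid : φ β - (-(d2 α)/2) = f β / ((α:ℂ) - β)^2 := by
      rw [hφ_def, hf_def]
      field_simp
      ring
    rw [dist_eq_norm, hid, norm_div, norm_pow]
    have hnormαβ : ‖((α:ℂ) - β)‖ = |β - α| := by
      rw [show ((α:ℂ) - β) = (((α - β : ℝ)) : ℂ) by push_cast; ring,
        Complex.norm_real, Real.norm_eq_abs, abs_sub_comm]
    rw [hnormαβ]
    have habs : (0:ℝ) < |β - α| := by
      rw [abs_pos, sub_ne_zero]; exact hβmem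
    rw [div_lt_iff₀ (by positivity)]
    calc ‖f β‖ ≤ (ε/2) * |β - α| * ‖β - α‖ := hmvt
      _ = (ε/2) * |β - α|^2 := by rw [Real.norm_eq_abs]; ring
      _ < ε * |β - α|^2 := by
          have hsq : (0:ℝ) < |β - α|^2 := by positivity
          nlinarith
  -- main singular term
  have hmain : Filter.Tendsto (fun β : ℝ => φ β / ((ζ α - ζ β) / ((α:ℂ) - β)))
      (nhdsWithin α {α}ᶜ) (nhds ((-(d2 α)/2) / d α)) := hφ.div hG (hζ' α)
  -- assemble
  have htot : Filter.Tendsto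
      (fun β : ℝ => φ β / ((ζ α - ζ β) / ((α:ℂ) - β))
        + (d β / 2) * (cotC17 ((ζ α - ζ β)/2) - 2/(ζ α - ζ β))
        - (1/2 : ℂ) * (cotC17 (((α:ℂ) - β)/2) - 2/((α:ℂ) - β)))
      (nhdsWithin α {α}ᶜ) (nhds ((-(d2 α)/2) / d α + 0 - 0)) :=
    (hmain.add hterm2).sub hterm3
  have hcongr : Filter.Tendsto
      (fun β : ℝ => (d β / 2) * cotC17 ((ζ α - ζ β) / 2)
          - (1 / 2 : ℂ) * cotC17 (((α : ℂ) - β) / 2))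
      (nhdsWithin α {α}ᶜ) (nhds (-(d2 α) / (2 * d α))) := by
    have hval : (-(d2 α)/2) / d α + 0 - 0 = -(d2 α) / (2 * d α) := by
      rw [add_zero, sub_zero, div_div]
    rw [← hval]
    apply htot.congr'
    filter_upwards [hne, hαβne] with β hb ha
    have hsplit : φ β / ((ζ α - ζ β) / ((α:ℂ) - β))
        = d β / (ζ α - ζ β) - 1 / ((α:ℂ) - β) := by
      rw [hφ_def]
      field_simp
    rw [hsplit]
    ring
  exact (Complex.continuous_im.tendsto _).comp hcongr
end
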